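/- arXiv:2403.17490 — 2 statements merged into one kernel-verified Lean document; each statement's English description precedes it below -/
import Mathlib

section
/- For the tensor-space generalization: let k, d₁,…,d_s be positive integers, f ∈ Sym^{kd₁}(W₁*) ⊗ ⋯ ⊗ Sym^{kd_s}(W_s*), and let q₀,…,q_r be a basis of Sym^{d₁}(W₁*) ⊗ ⋯ ⊗ Sym^{d_s}(W_s*) with dual basis q₀*,…,q_r* with respect to the composed apolarity pairing D_s. Then ∏_{j=1}^s ((kd_j)!/d_j!^k) · f = ∑_{0 ≤ i₁,…,i_k ≤ r} D_s(q_{i₁}* ⋯ q_{i_k}*, f) q_{i₁} ⋯ q_{i_k}. -/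
open MvPolynomial

noncomputable section

def derivOp (K : Type*) [Field K] {σ : Type*} [Fintype σ] [DecidableEq σ]
    (a : σ →₀ ℕ) : Module.End K (MvPolynomial σ K) :=
  (Finset.univ.toList.map fun j : σ => ((MvPolynomial.pderiv j).toLinearMap ^ (a j))).prod

/-- The composed apolarity pairing `D_s` (it acts by partial differentiation in
all the variables of all the factors, so it is the same derivative formula on
the polynomial model of `Sym^{d₁}(W₁*) ⊗ ⋯ ⊗ Sym^{d_s}(W_s*)`). -/
def apol {K : Type*} [Field K] {σ : Type*} [Fintype σ] [DecidableEq σ]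
    (u P : MvPolynomial σ K) : MvPolynomial σ K :=
  ∑ a ∈ u.support, u.coeff a • derivOp K a P

def apolS {K : Type*} [Field K] {σ : Type*} [Fintype σ] [DecidableEq σ]
    (u P : MvPolynomial σ K) : K :=
  MvPolynomial.constantCoeff (apol u P)

/-- `P` is multihomogeneous of multidegree `e`: every monomial of `P` has degree
`e j` in the block of variables belonging to the factor `W_j`.  This models
membership in `Sym^{e 1}(W₁*) ⊗ ⋯ ⊗ Sym^{e s}(W_s*)`. -/
def MultiHom {K : Type*} [Field K] {s : ℕ} {m : Fin s → ℕ}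
    (P : MvPolynomial ((j : Fin s) × Fin (m j)) K) (e : Fin s → ℕ) : Prop :=
  ∀ a ∈ P.support, ∀ j : Fin s, ∑ i : Fin (m j), a ⟨j, i⟩ = e j

/-!
Both sides are linear in `f`, so it suffices to take `f = x^e`. Expanding the `q*` in monomials,
`D_s(∏ₗ q*_{tₗ}, x^e) = e! · coeff_e (∏ₗ q*_{tₗ})`, and after summing over `t` the products factor
as `∏ₗ ∑ᵢ coeff_{uₗ}(q*ᵢ) qᵢ`. Duality turns each factor into `x^{uₗ} / uₗ!`, so the right-hand
side is `(e! ∑_{u₁ + ⋯ + u_k = e} ∏ₗ 1 / uₗ!) · x^e`. By the multinomial theorem the block powers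
`Pₙ = ∏ⱼ (∑ᵢ x_{j,i})^{nⱼ}` have coefficients `n! / a!`, and comparing the coefficient of `x^e`
in `P_d ^ k = P_{kd}` identifies the constant as `∏ⱼ (k dⱼ)! / (dⱼ!)^k`.
-/

open Finset Nat

def multiFactorial {σ : Type*} [Fintype σ] (a : σ →₀ ℕ) : ℕ := ∏ c, (a c)!

lemma multiFactorial_ne_zero {σ : Type*} [Fintype σ] (a : σ →₀ ℕ) : multiFactorial a ≠ 0 :=
  prod_ne_zero_iff.mpr fun c _ => factorial_ne_zero (a c)

section Apolarity

variable {R : Type*} [CommSemiring R] {σ : Type*}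

lemma coeff_pderiv_pow (c : σ) (t : ℕ) (e : σ →₀ ℕ) (p : MvPolynomial σ R) :
    coeff e (((pderiv c).toLinearMap ^ t) p) =
      (e c + t).descFactorial t * coeff (e + Finsupp.single c t) p := by
  induction t generalizing p with
  | zero => simp
  | succ t ih =>
    rw [pow_succ, Module.End.mul_apply, ih, Derivation.coeFn_coe, coeff_pderiv,
      add_assoc, ← Finsupp.single_add, Finsupp.add_apply, Finsupp.single_eq_same,
      ← add_assoc, Nat.succ_descFactorial_succ]
    push_cast
    ring

variable [DecidableEq σ]

lemma coeff_list_prod_pderiv_pow {l : List σ} (hl : l.Nodup) (a e : σ →₀ ℕ)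
    (p : MvPolynomial σ R) :
    coeff e ((l.map fun c => (pderiv c).toLinearMap ^ a c).prod p) =
      (∏ c ∈ l.toFinset, (e c + a c).descFactorial (a c) : ℕ) *
        coeff (e + ∑ c ∈ l.toFinset, Finsupp.single c (a c)) p := by
  induction l generalizing e with
  | nil => simp
  | cons c l ih =>
    obtain ⟨hc, hl⟩ := List.nodup_cons.mp hl
    have hc' : c ∉ l.toFinset := by simpa using hc
    have hshift : ∀ c' ∈ l.toFinset, (e + Finsupp.single c (a c)) c' = e c' := fun c' h => by
      rw [Finsupp.add_apply, Finsupp.single_eq_of_ne (by rintro rfl; exact hc' h), add_zero]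
    rw [List.map_cons, List.prod_cons, Module.End.mul_apply, coeff_pderiv_pow, ih hl,
      List.toFinset_cons, prod_insert hc', sum_insert hc', prod_congr rfl fun c' h => by
        rw [hshift c' h], add_assoc]
    push_cast
    ring

variable {K : Type*} [Field K] [Fintype σ]

lemma constantCoeff_derivOp (a : σ →₀ ℕ) (p : MvPolynomial σ K) :
    constantCoeff (derivOp K a p) = multiFactorial a * coeff a p := by
  have := coeff_list_prod_pderiv_pow (nodup_toList univ) a 0 p
  rw [toList_toFinset, Finsupp.univ_sum_single, zero_add] at this
  rw [constantCoeff_eq, derivOp, this, multiFactorial]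
  simp [Nat.descFactorial_self]

lemma apolS_eq_sum (u P : MvPolynomial σ K) :
    apolS u P = ∑ a ∈ u.support, coeff a u * multiFactorial a * coeff a P := by
  simp [apolS, apol, smul_eq_C_mul, constantCoeff_derivOp, mul_assoc]

lemma apolS_monomial_right (u : MvPolynomial σ K) (e : σ →₀ ℕ) (r : K) :
    apolS u (monomial e r) = coeff e u * multiFactorial e * r := by
  rw [apolS_eq_sum, sum_eq_single e]
  · rw [coeff_monomial, if_pos rfl]
  · intro a _ hae
    rw [coeff_monomial, if_neg (Ne.symm hae), mul_zero]
  · intro he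
    rw [notMem_support_iff.mp he, zero_mul, zero_mul]

def apolarityForm (u : MvPolynomial σ K) : MvPolynomial σ K →ₗ[K] K :=
  ∑ a ∈ u.support, (coeff a u * multiFactorial a) • lcoeff K a

lemma apolarityForm_apply (u P : MvPolynomial σ K) : apolarityForm u P = apolS u P := by
  simp [apolarityForm, apolS_eq_sum, LinearMap.sum_apply]

lemma sum_apolS_smul_eq_smul_of_monomial {κ : Type*} [Fintype κ] (u w : κ → MvPolynomial σ K)
    (c : K) {f : MvPolynomial σ K}
    (h : ∀ e ∈ f.support, ∑ t, apolS (u t) (monomial e 1) • w t = c • monomial e 1) :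
    ∑ t, apolS (u t) f • w t = c • f := by
  have hf : f = ∑ e ∈ f.support, coeff e f • monomial e (1 : K) := by
    conv_lhs => rw [f.as_sum]
    simp_rw [smul_monomial, smul_eq_mul, mul_one]
  calc ∑ t, apolS (u t) f • w t
      = ∑ e ∈ f.support, coeff e f • ∑ t, apolS (u t) (monomial e 1) • w t := by
        conv_lhs => rw [hf]
        simp_rw [← apolarityForm_apply, map_sum, map_smul, smul_eq_mul, sum_smul, mul_smul,
          smul_sum]
        rw [sum_comm]
    _ = c • f := by
        conv_rhs => rw [hf, smul_sum]
        exact sum_congr rfl fun e he => by rw [h e he, smul_comm]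

end Apolarity

lemma eq_sum_smul_of_mem_span {R M ι : Type*} [CommSemiring R] [AddCommMonoid M] [Module R M]
    [Fintype ι] [DecidableEq ι] (ψ : ι → M →ₗ[R] R) (q : ι → M)
    (hdual : ∀ i j, ψ i (q j) = if i = j then 1 else 0) {g : M}
    (hg : g ∈ Submodule.span R (Set.range q)) : g = ∑ i, ψ i g • q i := by
  obtain ⟨c, rfl⟩ := (Submodule.mem_span_range_iff_exists_fun R).mp hg
  refine sum_congr rfl fun i _ => ?_
  simp [hdual]

lemma eq_sum_monomial_of_support_subset {R σ : Type*} [CommSemiring R] {p : MvPolynomial σ R}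
    {S : Finset (σ →₀ ℕ)} (h : p.support ⊆ S) : p = ∑ a ∈ S, monomial a (coeff a p) := by
  conv_lhs => rw [p.as_sum]
  exact sum_subset h fun a _ ha => by rw [notMem_support_iff.mp ha, map_zero]

lemma coeff_prod_sum_monomial {R σ ι : Type*} [CommSemiring R] [DecidableEq σ] [Fintype ι]
    [DecidableEq ι] (S : Finset (σ →₀ ℕ)) (c : ι → (σ →₀ ℕ) → R) (e : σ →₀ ℕ) :
    coeff e (∏ l, ∑ a ∈ S, monomial a (c l a)) =
      ∑ u ∈ Fintype.piFinset (fun _ : ι => S) with ∑ l, u l = e, ∏ l, c l (u l) := by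
  simp_rw [prod_univ_sum, ← monomial_sum_prod, coeff_sum, coeff_monomial, sum_filter]

section Blocks

variable {K : Type*} [Field K] {s : ℕ} {m : Fin s → ℕ}

def flattenExponent (m : Fin s → ℕ) :
    ((j : Fin s) → Fin (m j) → ℕ) ≃ ((j : Fin s) × Fin (m j) →₀ ℕ) :=
  (Equiv.piCurry fun _ _ => ℕ).symm.trans Finsupp.equivFunOnFinite.symm

def multidegreeSet (m n : Fin s → ℕ) : Finset ((j : Fin s) × Fin (m j) →₀ ℕ) :=
  (Fintype.piFinset fun j => univ.piAntidiag (n j)).map (flattenExponent m).toEmbedding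

lemma mem_multidegreeSet {n : Fin s → ℕ} {a : (j : Fin s) × Fin (m j) →₀ ℕ} :
    a ∈ multidegreeSet m n ↔ ∀ j, ∑ i, a ⟨j, i⟩ = n j := by
  rw [multidegreeSet, Finset.mem_map_equiv]
  simp [flattenExponent, Equiv.piCurry]
  rfl

lemma multiHom_monomial {n : Fin s → ℕ} {a : (j : Fin s) × Fin (m j) →₀ ℕ}
    (ha : a ∈ multidegreeSet m n) (r : K) : MultiHom (monomial a r) n := fun _ hb =>
  mem_multidegreeSet.mp (Finset.mem_singleton.mp (support_monomial_subset hb) ▸ ha)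

variable (K m) in
def blockPower (n : Fin s → ℕ) : MvPolynomial ((j : Fin s) × Fin (m j)) K :=
  ∏ j, (∑ i, X ⟨j, i⟩) ^ n j

lemma blockPower_pow (k : ℕ) (n : Fin s → ℕ) :
    blockPower K m n ^ k = blockPower K m (fun j => k * n j) := by
  simp_rw [blockPower, ← prod_pow, ← pow_mul, mul_comm]

lemma sum_single_flattenExponent (κ : (j : Fin s) → Fin (m j) → ℕ) :
    ∑ j, ∑ i, Finsupp.single (⟨j, i⟩ : (j : Fin s) × Fin (m j)) (κ j i) =
      flattenExponent m κ := by
  rw [← Fintype.sum_sigma (fun c : (j : Fin s) × Fin (m j) => Finsupp.single c (κ c.1 c.2))]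
  exact Finsupp.univ_sum_single (flattenExponent m κ)

lemma multiFactorial_mul_prod_multinomial {n : Fin s → ℕ} {κ : (j : Fin s) → Fin (m j) → ℕ}
    (hκ : κ ∈ Fintype.piFinset fun j => univ.piAntidiag (n j)) :
    multiFactorial (flattenExponent m κ) * ∏ j, Nat.multinomial univ (κ j) = ∏ j, (n j)! := by
  rw [multiFactorial, Fintype.prod_sigma, ← prod_mul_distrib]
  refine prod_congr rfl fun j _ => ?_
  rw [← (mem_piAntidiag.mp (Fintype.mem_piFinset.mp hκ j)).1, ← Nat.multinomial_spec]
  rfl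

lemma blockPower_eq_sum [CharZero K] (n : Fin s → ℕ) :
    blockPower K m n =
      ∑ a ∈ multidegreeSet m n, monomial a ((∏ j, (n j)! : K) / multiFactorial a) := by
  have hblock : ∀ j, (∑ i, X ⟨j, i⟩ : MvPolynomial ((j : Fin s) × Fin (m j)) K) ^ n j =
      ∑ κ ∈ univ.piAntidiag (n j),
        monomial (∑ i, Finsupp.single ⟨j, i⟩ (κ i)) (Nat.multinomial univ κ : K) := by
    intro j
    rw [sum_pow_eq_sum_piAntidiag]
    refine sum_congr rfl fun κ _ => ?_
    simp_rw [X_pow_eq_monomial, ← monomial_sum_one, ← C_eq_coe_nat, C_mul_monomial, mul_one]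
  rw [blockPower, prod_congr rfl fun j _ => hblock j, prod_univ_sum, multidegreeSet, sum_map]
  refine sum_congr rfl fun κ hκ => ?_
  rw [← monomial_sum_prod, sum_single_flattenExponent, Equiv.coe_toEmbedding]
  congr 1
  rw [eq_div_iff (Nat.cast_ne_zero.mpr (multiFactorial_ne_zero _)), mul_comm]
  exact_mod_cast multiFactorial_mul_prod_multinomial hκ

lemma coeff_blockPower [CharZero K] {n : Fin s → ℕ} {e : (j : Fin s) × Fin (m j) →₀ ℕ}
    (he : e ∈ multidegreeSet m n) :
    coeff e (blockPower K m n) = (∏ j, (n j)! : K) / multiFactorial e := by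
  rw [blockPower_eq_sum, coeff_sum]
  simp_rw [coeff_monomial]
  rw [sum_ite_eq', if_pos he]

lemma multiFactorial_mul_sum_prod_inv [CharZero K] (k : ℕ) (d : Fin s → ℕ)
    {e : (j : Fin s) × Fin (m j) →₀ ℕ} (he : e ∈ multidegreeSet m fun j => k * d j) :
    (multiFactorial e : K) * ∑ u ∈ Fintype.piFinset (fun _ : Fin k => multidegreeSet m d)
        with ∑ l, u l = e, ∏ l, (multiFactorial (u l) : K)⁻¹ =
      ∏ j, ((k * d j)! : K) / (d j)! ^ k := by
  have hcoeff := congrArg (coeff e) (blockPower_pow (K := K) (m := m) k d)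
  rw [← Fin.prod_const, coeff_blockPower he,
    prod_congr rfl fun _ _ => blockPower_eq_sum d, coeff_prod_sum_monomial] at hcoeff
  simp_rw [prod_div_distrib, Fin.prod_const, div_eq_mul_inv, ← prod_inv_distrib, ← mul_sum]
    at hcoeff
  have hD : (∏ j, ((d j)! : K)) ≠ 0 :=
    prod_ne_zero_iff.mpr fun j _ => Nat.cast_ne_zero.mpr (factorial_ne_zero _)
  rw [prod_div_distrib, prod_pow, eq_div_iff (pow_ne_zero _ hD), mul_assoc, mul_comm _ (_ ^ k),
    hcoeff, mul_comm, inv_mul_cancel_right₀ (Nat.cast_ne_zero.mpr (multiFactorial_ne_zero e))]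

end Blocks

section Taylor

variable {K : Type*} [Field K] [CharZero K] {σ : Type*} [Fintype σ] [DecidableEq σ]
  {ι : Type*} [Fintype ι] [DecidableEq ι] {q qstar : ι → MvPolynomial σ K}

lemma sum_coeff_smul_eq_monomial (hdual : ∀ i j, apolS (qstar i) (q j) = if i = j then 1 else 0)
    {a : σ →₀ ℕ} (ha : monomial a 1 ∈ Submodule.span K (Set.range q)) :
    ∑ i, coeff a (qstar i) • q i = monomial a ((multiFactorial a : K)⁻¹) := by
  have hfact : (multiFactorial a : K) ≠ 0 := Nat.cast_ne_zero.mpr (multiFactorial_ne_zero a)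
  have hrepr := eq_sum_smul_of_mem_span (fun i => apolarityForm (qstar i)) q
    (by simpa only [apolarityForm_apply] using hdual) ha
  simp_rw [apolarityForm_apply, apolS_monomial_right, mul_one, mul_comm _ (multiFactorial a : K),
    mul_smul, ← smul_sum] at hrepr
  rw [← inv_smul_smul₀ hfact (∑ i, _), ← hrepr, smul_monomial, smul_eq_mul, mul_one]

theorem sum_apolS_prod_smul_prod_monomial {S : Finset (σ →₀ ℕ)}
    (hsupp : ∀ i, (qstar i).support ⊆ S)
    (hspan : ∀ a ∈ S, monomial a 1 ∈ Submodule.span K (Set.range q))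
    (hdual : ∀ i j, apolS (qstar i) (q j) = if i = j then 1 else 0) (k : ℕ) (e : σ →₀ ℕ) :
    ∑ t : Fin k → ι, apolS (∏ l, qstar (t l)) (monomial e 1) • ∏ l, q (t l) =
      ((multiFactorial e : K) * ∑ u ∈ Fintype.piFinset (fun _ : Fin k => S) with ∑ l, u l = e,
        ∏ l, (multiFactorial (u l) : K)⁻¹) • monomial e 1 := by
  have hpair : ∀ t : Fin k → ι, apolS (∏ l, qstar (t l)) (monomial e 1) =
      multiFactorial e * ∑ u ∈ Fintype.piFinset (fun _ : Fin k => S) with ∑ l, u l = e,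
        ∏ l, coeff (u l) (qstar (t l)) := by
    intro t
    rw [apolS_monomial_right, prod_congr rfl fun l _ =>
      eq_sum_monomial_of_support_subset (hsupp (t l)), coeff_prod_sum_monomial]
    ring
  calc ∑ t : Fin k → ι, apolS (∏ l, qstar (t l)) (monomial e 1) • ∏ l, q (t l)
      = (multiFactorial e : K) • ∑ u ∈ Fintype.piFinset (fun _ : Fin k => S) with ∑ l, u l = e,
          ∏ l, ∑ i, coeff (u l) (qstar i) • q i := by
        simp_rw [hpair, Fintype.prod_sum, prod_smul, mul_smul, sum_smul, ← smul_sum]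
        rw [sum_comm]
    _ = (multiFactorial e : K) • ∑ u ∈ Fintype.piFinset (fun _ : Fin k => S) with ∑ l, u l = e,
          monomial e (∏ l, (multiFactorial (u l) : K)⁻¹) := by
        refine congrArg _ (sum_congr rfl fun u hu => ?_)
        obtain ⟨huS, rfl⟩ := mem_filter.mp hu
        rw [prod_congr rfl fun l _ => sum_coeff_smul_eq_monomial hdual
          (hspan (u l) (Fintype.mem_piFinset.mp huS l)), monomial_sum_prod]
    _ = _ := by
        simp only [← map_sum, smul_monomial, smul_eq_mul, mul_one]

end Taylor

theorem taylor_identity_tensor_general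
    (K : Type*) [Field K] [CharZero K] (s k : ℕ)
    (m : Fin s → ℕ) (d : Fin s → ℕ)
    (ι : Type*) [Fintype ι] [DecidableEq ι]
    (q qstar : ι → MvPolynomial ((j : Fin s) × Fin (m j)) K)
    (hqstar : ∀ i, MultiHom (qstar i) d)
    (hspan : ∀ g : MvPolynomial ((j : Fin s) × Fin (m j)) K,
      MultiHom g d → g ∈ Submodule.span K (Set.range q))
    (hdual : ∀ i j, apolS (qstar i) (q j) = if i = j then 1 else 0)
    (f : MvPolynomial ((j : Fin s) × Fin (m j)) K)
    (hf : MultiHom f (fun j => k * d j)) :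
    (∏ j, (Nat.factorial (k * d j) : K) / (Nat.factorial (d j) : K) ^ k) • f
      = ∑ t : Fin k → ι, apolS (∏ l, qstar (t l)) f • ∏ l, q (t l) := by
  have hsupp : ∀ i, (qstar i).support ⊆ multidegreeSet m d := fun i a ha =>
    mem_multidegreeSet.mpr (hqstar i a ha)
  have hmonomial :
      ∀ a ∈ multidegreeSet m d, monomial a (1 : K) ∈ Submodule.span K (Set.range q) :=
    fun a ha => hspan _ (multiHom_monomial ha 1)
  refine (sum_apolS_smul_eq_smul_of_monomial _ _ _ fun e he => ?_).symm
  rw [sum_apolS_prod_smul_prod_monomial hsupp hmonomial hdual,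
    multiFactorial_mul_sum_prod_inv k d (mem_multidegreeSet.mpr (hf e he))]

/-- tensor-space generalization of the Taylor-like identity.
If `q₀,…,q_r` is a basis of `Sym^{d₁}(W₁*)⊗⋯⊗Sym^{d_s}(W_s*)` with dual basis
`q₀*,…,q_r*` with respect to the composed apolarity pairing `D_s`, then for
every `f ∈ Sym^{kd₁}(W₁*)⊗⋯⊗Sym^{kd_s}(W_s*)`,
`∏_j ((kd_j)!/d_j!^k) · f = ∑ D_s(q_{i₁}*⋯q_{i_k}*, f) q_{i₁}⋯q_{i_k}`. -/
theorem taylor_identity_tensor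
    (K : Type*) [Field K] [CharZero K] (s k : ℕ) (hs : 1 ≤ s) (hk : 1 ≤ k)
    (m : Fin s → ℕ) (hm : ∀ j, 1 ≤ m j) (d : Fin s → ℕ) (hd : ∀ j, 1 ≤ d j)
    (ι : Type*) [Fintype ι] [DecidableEq ι]
    (q qstar : ι → MvPolynomial ((j : Fin s) × Fin (m j)) K)
    (hq : ∀ i, MultiHom (q i) d) (hqstar : ∀ i, MultiHom (qstar i) d)
    (hspan : ∀ g : MvPolynomial ((j : Fin s) × Fin (m j)) K,
      MultiHom g d → g ∈ Submodule.span K (Set.range q))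
    (hdual : ∀ i j, apolS (qstar i) (q j) = if i = j then 1 else 0)
    (f : MvPolynomial ((j : Fin s) × Fin (m j)) K)
    (hf : MultiHom f (fun j => k * d j)) :
    (∏ j, (Nat.factorial (k * d j) : K) / (Nat.factorial (d j) : K) ^ k) • f
      = ∑ t : Fin k → ι, apolS (∏ l, qstar (t l)) f • ∏ l, q (t l) :=
  taylor_identity_tensor_general K s k m d ι q qstar hqstar hspan hdual f hf
end
end

section
/- Let f be a stable binary form of odd degree k ≥ 5 with trivial reduced stabilizer, and let q₀, q₁ be covariants of order 1 of Sym^k(W*) that are linearly independent at f. Then f̃ = ∑_{i=0}^k binom(k,i)·(q₀(f)^i q₁(f)^{k−i}, f)_k · X₀^i X₁^{k−i}, regarded as a binary form in X₀, X₁, is GL₂-equivalent to f. -/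
open MvPolynomial Matrix

noncomputable section

def bexp (a b : ℕ) : Fin 2 →₀ ℕ := Finsupp.equivFunOnFinite.symm ![a, b]

/-- The transvectant of level `l` of two binary forms. -/
def transvect {K : Type*} [Field K] (l : ℕ)
    (f g : MvPolynomial (Fin 2) K) : MvPolynomial (Fin 2) K :=
  ∑ i ∈ Finset.range (l + 1),
    ((-1 : K) ^ i * (l.choose i : K)) •
      (derivOp K (bexp i (l - i)) f * derivOp K (bexp (l - i) i) g)

def polyAct {K : Type*} [Field K] {σ : Type*} [Fintype σ] [DecidableEq σ]
    (N : Matrix σ σ K) (P : MvPolynomial σ K) : MvPolynomial σ K :=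
  bind₁ (fun i => ∑ j, N i j • X j) P

def actDual {K : Type*} [Field K] {σ : Type*} [Fintype σ] [DecidableEq σ]
    (M : Matrix σ σ K) (P : MvPolynomial σ K) : MvPolynomial σ K :=
  polyAct M⁻¹ P

def IsCovariant {K : Type*} [Field K] {m : ℕ} (k r dC : ℕ)
    (C : MvPolynomial (Fin m) K → MvPolynomial (Fin m) K) : Prop :=
  (∀ f : MvPolynomial (Fin m) K, f.IsHomogeneous k → (C f).IsHomogeneous r)
  ∧ (∀ (c : K) (f : MvPolynomial (Fin m) K), f.IsHomogeneous k →
      C (c • f) = c ^ dC • C f)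
  ∧ (∀ M : Matrix (Fin m) (Fin m) K, M.det = 1 →
      ∀ f : MvPolynomial (Fin m) K, f.IsHomogeneous k →
        C (actDual M f) = actDual M (C f))

def MonIdx (m d : ℕ) : Type := {v : Fin m → ℕ // v ∈ Finset.Nat.antidiagonalTuple m d}

instance (m d : ℕ) : Fintype (MonIdx m d) := by unfold MonIdx; infer_instance
instance (m d : ℕ) : DecidableEq (MonIdx m d) := by unfold MonIdx; infer_instance

def OrbitSL {K : Type*} [Field K] {m : ℕ} (f : MvPolynomial (Fin m) K) :
    Set (MvPolynomial (Fin m) K) :=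
  {g | ∃ M : Matrix (Fin m) (Fin m) K, M.det = 1 ∧ g = actDual M f}

def ZClosed {K : Type*} [Field K] {m : ℕ} (N : ℕ)
    (A : Set (MvPolynomial (Fin m) K)) : Prop :=
  ∃ S : Set (MvPolynomial (MonIdx m N) K),
    A = {P | P.IsHomogeneous N ∧ ∀ g ∈ S,
      eval (fun v : MonIdx m N => P.coeff (Finsupp.equivFunOnFinite.symm v.1)) g = 0}

def StabSL {K : Type*} [Field K] {m : ℕ} (f : MvPolynomial (Fin m) K) :
    Set (Matrix (Fin m) (Fin m) K) :=
  {M | M.det = 1 ∧ actDual M f = f}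

/-!
For a linear form `ℓ = α X₀ + β X₁` and a form `f` of degree `k`, the transvectant
`(ℓ^k, f)_k` is the constant `(k!)² f(β, -α)`: the derivatives `∂₀^s ∂₁^t ℓ^k = k! αˢ βᵗ` and
`∂₀^(k-i) ∂₁^i f = (k-i)! i! · coeff` are constants, and the binomial factors recombine into
`(k!)²`. Evaluating `f̃` at `x` collapses, by the binomial theorem, into `(ℓ^k, f)_k` with
`ℓ = x₀ q₀(f) + x₁ q₁(f)`, so `f̃(x) = (k!)² f(N x)` for a matrix `N` whose determinant is that of
the coefficient matrix of `q₀(f), q₁(f)`, nonzero by linear independence. Since `K` is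
algebraically closed, the factor `(k!)²` is absorbed into `N` by a `k`-th root.
-/

namespace MvPolynomial

variable {R σ : Type*} [CommSemiring R]

lemma IsHomogeneous.exists_eq_sum_smul_X [Fintype σ] {p : MvPolynomial σ R}
    (hp : p.IsHomogeneous 1) : ∃ c : σ → R, ∑ j, c j • X j = p := by
  have hmem : p ∈ homogeneousSubmodule σ R 1 := hp
  rw [homogeneousSubmodule_one_eq_span_X] at hmem
  exact (Submodule.mem_span_range_iff_exists_fun R).mp hmem

lemma IsHomogeneous.eval_smul {n : ℕ} {p : MvPolynomial σ R} (hp : p.IsHomogeneous n)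
    (e : R) (y : σ → R) : eval (e • y) p = e ^ n * eval y p := by
  conv_lhs => rw [p.as_sum]
  conv_rhs => rw [p.as_sum]
  rw [map_sum, map_sum, Finset.mul_sum]
  refine Finset.sum_congr rfl fun d hd => ?_
  have hdeg : d.degree = n := by
    rw [Finsupp.degree_eq_weight_one]; exact hp (mem_support_iff.mp hd)
  simp only [eval_monomial, Finsupp.prod, Pi.smul_apply, smul_eq_mul, mul_pow,
    Finset.prod_mul_distrib, Finset.prod_pow_eq_pow_sum, ← hdeg, Finsupp.degree_apply]
  ring

lemma pderiv_pow_apply_monomial (j : σ) (m : ℕ) (d : σ →₀ ℕ) (c : R) :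
    ((pderiv j).toLinearMap ^ m) (monomial d c)
      = monomial (d - Finsupp.single j m) (c * (d j).descFactorial m) := by
  induction m with
  | zero => simp
  | succ m ih =>
    rw [pow_succ', Module.End.mul_apply, ih, Derivation.coeFn_coe, pderiv_monomial,
      tsub_tsub, ← Finsupp.single_add, Finsupp.tsub_apply, Finsupp.single_eq_same,
      Nat.descFactorial_succ]
    push_cast
    congr 1
    ring

lemma commute_pderiv (i j : σ) :
    Commute ((pderiv i).toLinearMap : Module.End R (MvPolynomial σ R)) (pderiv j).toLinearMap := by
  refine MvPolynomial.linearMap_ext fun d => LinearMap.ext fun c => ?_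
  change pderiv i (pderiv j (monomial d c)) = pderiv j (pderiv i (monomial d c))
  by_cases h : i = j
  · rw [h]
  simp only [pderiv_monomial, tsub_tsub, add_comm (Finsupp.single i 1), Finsupp.tsub_apply,
    Finsupp.single_eq_of_ne h, Finsupp.single_eq_of_ne' h, Nat.sub_zero]
  congr 1
  ring

lemma pderiv_pow_apply_pow (j : σ) {ℓ : MvPolynomial σ R} {c : R} (hℓ : pderiv j ℓ = C c)
    (m t : ℕ) :
    ((pderiv j).toLinearMap ^ t) (ℓ ^ m) = (m.descFactorial t * c ^ t : R) • ℓ ^ (m - t) := by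
  induction t with
  | zero => simp
  | succ t ih =>
    rw [pow_succ', Module.End.mul_apply, ih, map_smul, Derivation.coeFn_coe, pderiv_pow, hℓ,
      Nat.descFactorial_succ, smul_eq_C_mul, smul_eq_C_mul, Nat.sub_sub]
    push_cast
    simp only [map_mul, map_pow, map_natCast]
    ring

end MvPolynomial

lemma eval_polyAct {K σ : Type*} [Field K] [Fintype σ] [DecidableEq σ] (N : Matrix σ σ K)
    (x : σ → K) (P : MvPolynomial σ K) : eval x (polyAct N P) = eval (N *ᵥ x) P := by
  change eval₂Hom (RingHom.id K) x (bind₁ _ P) = _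
  rw [eval₂Hom_bind₁]
  refine congrArg (fun y => eval y P) (funext fun i => ?_)
  simp [mulVec, dotProduct]

lemma polyAct_smul_of_isHomogeneous {K σ : Type*} [Field K] [Infinite K] [Fintype σ]
    [DecidableEq σ] {n : ℕ} {f : MvPolynomial σ K} (hf : f.IsHomogeneous n) (e : K)
    (N : Matrix σ σ K) : polyAct (e • N) f = e ^ n • polyAct N f :=
  MvPolynomial.funext fun x => by
    rw [eval_polyAct, smul_eval, eval_polyAct, smul_mulVec, hf.eval_smul]

lemma Matrix.det_ne_zero_of_linearIndependent_sum_smul {K ι M : Type*} [Field K] [Fintype ι]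
    [DecidableEq ι] [AddCommGroup M] [Module K M] (A : Matrix ι ι K) (v : ι → M)
    (h : LinearIndependent K fun i => ∑ j, A i j • v j) : A.det ≠ 0 := by
  have hrows : LinearIndependent K A.row :=
    LinearIndependent.of_comp (Fintype.linearCombination K v) h
  exact ((Matrix.isUnit_iff_isUnit_det A).mp
    (Matrix.linearIndependent_rows_iff_isUnit.mp hrows)).ne_zero

section BinaryForms

open scoped Nat

variable {K : Type*} [Field K]

@[simp] lemma bexp_apply_zero (a b : ℕ) : bexp a b 0 = a := rfl

@[simp] lemma bexp_apply_one (a b : ℕ) : bexp a b 1 = b := rfl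

lemma eq_bexp_iff {d : Fin 2 →₀ ℕ} {a b : ℕ} : d = bexp a b ↔ d 0 = a ∧ d 1 = b := by
  refine ⟨by rintro rfl; simp, fun ⟨h0, h1⟩ => ?_⟩
  ext i
  fin_cases i <;> simpa

lemma eval_monomial_bexp {R : Type*} [CommSemiring R] (y : Fin 2 → R) (a b : ℕ) (c : R) :
    eval y (monomial (bexp a b) c) = c * y 0 ^ a * y 1 ^ b := by
  rw [eval_monomial, Finsupp.prod_fintype _ _ fun i => pow_zero (y i), Fin.prod_univ_two,
    bexp_apply_zero, bexp_apply_one, mul_assoc]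

lemma MvPolynomial.IsHomogeneous.eq_sum_monomial_bexp {R : Type*} [CommSemiring R] {k : ℕ}
    {f : MvPolynomial (Fin 2) R}
    (hf : f.IsHomogeneous k) :
    f = ∑ i ∈ Finset.range (k + 1), monomial (bexp (k - i) i) (coeff (bexp (k - i) i) f) := by
  have hinj : Set.InjOn (fun i => bexp (k - i) i) (Finset.range (k + 1)) :=
    fun i _ j _ h => by simpa using congrArg (· 1) h
  rw [← Finset.sum_image (f := fun d => monomial d (coeff d f)) hinj]
  conv_lhs => rw [f.as_sum]
  refine Finset.sum_subset (fun d hd => ?_) fun d _ hd => by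
    rw [notMem_support_iff.mp hd, monomial_zero]
  have hdeg : d 0 + d 1 = k := by
    simpa [Finsupp.weight_apply, Finsupp.sum_fintype, Fin.sum_univ_two] using
      hf (mem_support_iff.mp hd)
  exact Finset.mem_image.mpr ⟨d 1, Finset.mem_range.mpr (by omega),
    (eq_bexp_iff.mpr ⟨by omega, rfl⟩).symm⟩

lemma derivOp_apply (a : Fin 2 →₀ ℕ) (P : MvPolynomial (Fin 2) K) :
    derivOp K a P = ((pderiv 0).toLinearMap ^ a 0) (((pderiv 1).toLinearMap ^ a 1) P) := by
  have hperm : (Finset.univ.toList : List (Fin 2)).Perm [0, 1] := by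
    rw [← Multiset.coe_eq_coe, Finset.coe_toList]
    decide
  have hcomm : [0, 1].map (fun j : Fin 2 => (pderiv j).toLinearMap ^ a j) |>.Pairwise
      (Commute : Module.End K (MvPolynomial (Fin 2) K) → _ → Prop) := by
    simpa using (commute_pderiv 0 1).pow_pow _ _
  rw [derivOp, (hperm.map _).prod_eq' (hperm.map _ |>.pairwise_iff Commute.symm |>.mpr hcomm)]
  simp [Module.End.mul_apply]

lemma derivOp_monomial (a d : Fin 2 →₀ ℕ) (c : K) :
    derivOp K a (monomial d c)
      = monomial (d - a) (c * (d 0).descFactorial (a 0) * (d 1).descFactorial (a 1)) := by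
  have hexp : d - Finsupp.single 1 (a 1) - Finsupp.single 0 (a 0) = d - a := by
    ext i
    fin_cases i <;> simp
  rw [derivOp_apply, pderiv_pow_apply_monomial, pderiv_pow_apply_monomial, hexp]
  simp [mul_right_comm]

lemma derivOp_bexp_monomial_bexp {s t i : ℕ} (hi : i ≤ s + t) (c : K) :
    derivOp K (bexp s t) (monomial (bexp (s + t - i) i) c)
      = if i = t then C (s ! * t ! * c) else 0 := by
  rw [derivOp_monomial]
  split_ifs with h
  · subst h
    simp [Nat.descFactorial_self, mul_comm, mul_assoc]
  · rcases Nat.lt_or_gt_of_ne h with h | h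
    · simp [Nat.descFactorial_eq_zero_iff_lt.mpr h]
    · simp [Nat.descFactorial_eq_zero_iff_lt.mpr (by omega : s + t - i < s)]

lemma derivOp_bexp_of_isHomogeneous {s t : ℕ} {f : MvPolynomial (Fin 2) K}
    (hf : f.IsHomogeneous (s + t)) :
    derivOp K (bexp s t) f = C (s ! * t ! * coeff (bexp s t) f) := by
  conv_lhs => rw [hf.eq_sum_monomial_bexp]
  rw [map_sum, Finset.sum_congr rfl fun i hi =>
      derivOp_bexp_monomial_bexp (Nat.lt_succ_iff.mp (Finset.mem_range.mp hi)) _,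
    Finset.sum_ite_eq' _ t, if_pos (Finset.mem_range.mpr (by omega)), Nat.add_sub_cancel]

lemma derivOp_bexp_linearForm_pow (s t : ℕ) (α β : K) :
    derivOp K (bexp s t) ((α • X 0 + β • X 1 : MvPolynomial (Fin 2) K) ^ (s + t))
      = C ((s + t) ! * α ^ s * β ^ t) := by
  have h0 : pderiv 0 (α • X 0 + β • X 1 : MvPolynomial (Fin 2) K) = C α := by
    simp [pderiv_X, smul_eq_C_mul]
  have h1 : pderiv 1 (α • X 0 + β • X 1 : MvPolynomial (Fin 2) K) = C β := by
    simp [pderiv_X, smul_eq_C_mul]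
  rw [derivOp_apply, bexp_apply_zero, bexp_apply_one, pderiv_pow_apply_pow 1 h1, map_smul,
    Nat.add_sub_cancel, pderiv_pow_apply_pow 0 h0, Nat.sub_self, pow_zero, smul_smul,
    Nat.descFactorial_self, ← Nat.factorial_mul_descFactorial (Nat.le_add_left t s),
    Nat.add_sub_cancel, smul_eq_C_mul, mul_one]
  push_cast
  congr 1
  ring

lemma transvect_smul_left (l : ℕ) (c : K) (g f : MvPolynomial (Fin 2) K) :
    transvect l (c • g) f = c • transvect l g f := by
  simp only [transvect, Finset.smul_sum, map_smul, smul_mul_assoc, smul_comm c]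

lemma transvect_sum_left {ι : Type*} (l : ℕ) (A : Finset ι) (g : ι → MvPolynomial (Fin 2) K)
    (f : MvPolynomial (Fin 2) K) :
    transvect l (∑ i ∈ A, g i) f = ∑ i ∈ A, transvect l (g i) f := by
  simp only [transvect, map_sum, Finset.sum_mul, Finset.smul_sum]
  exact Finset.sum_comm

lemma transvect_linearForm_pow {k : ℕ} {f : MvPolynomial (Fin 2) K} (hf : f.IsHomogeneous k)
    (α β : K) :
    transvect k ((α • X 0 + β • X 1 : MvPolynomial (Fin 2) K) ^ k) f
      = C ((k ! : K) ^ 2 * eval ![β, -α] f) := by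
  conv_rhs => rw [hf.eq_sum_monomial_bexp, map_sum, Finset.mul_sum, map_sum]
  refine Finset.sum_congr rfl fun i hi => ?_
  obtain ⟨t, rfl⟩ := Nat.exists_eq_add_of_le (Nat.lt_succ_iff.mp (Finset.mem_range.mp hi))
  have hchoose : ((i + t).choose i : K) * i ! * t ! = (i + t) ! := by
    rw [Nat.choose_symm_add]
    exact_mod_cast congrArg (Nat.cast : ℕ → K) (Nat.add_choose_mul_factorial_mul_factorial i t)
  rw [Nat.add_sub_cancel_left, derivOp_bexp_linearForm_pow,
    derivOp_bexp_of_isHomogeneous (add_comm i t ▸ hf), eval_monomial_bexp, smul_eq_C_mul,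
    ← C_mul, ← C_mul]
  congr 1
  simp only [Matrix.cons_val_zero, Matrix.cons_val_one, neg_pow α, ← hchoose]
  ring

/-- The form `f̃` built from `u = q₀(f)` and `v = q₁(f)`. -/
def reconstruction (k : ℕ) (u v f : MvPolynomial (Fin 2) K) : MvPolynomial (Fin 2) K :=
  ∑ i ∈ Finset.range (k + 1),
    (k.choose i : K) • (transvect k (u ^ i * v ^ (k - i)) f * monomial (bexp i (k - i)) 1)

lemma eval_reconstruction (k : ℕ) (u v f : MvPolynomial (Fin 2) K) (x : Fin 2 → K) :
    eval x (reconstruction k u v f) = eval x (transvect k ((x 0 • u + x 1 • v) ^ k) f) := by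
  rw [add_pow, transvect_sum_left, reconstruction, map_sum, map_sum]
  refine Finset.sum_congr rfl fun i _ => ?_
  have hterm : (x 0 • u) ^ i * (x 1 • v) ^ (k - i) * (k.choose i : MvPolynomial (Fin 2) K)
      = ((k.choose i : K) * x 0 ^ i * x 1 ^ (k - i)) • (u ^ i * v ^ (k - i)) := by
    simp only [smul_eq_C_mul, mul_pow, map_mul, map_pow, map_natCast]
    ring
  rw [hterm, transvect_smul_left]
  simp only [smul_eval, _root_.map_mul, eval_monomial_bexp]
  ring

lemma reconstruction_linearForms [Infinite K] {k : ℕ} {f : MvPolynomial (Fin 2) K}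
    (hf : f.IsHomogeneous k) (a b c d : K) :
    reconstruction k (a • X 0 + b • X 1) (c • X 0 + d • X 1) f
      = ((k ! : K) ^ 2) • polyAct !![b, d; -a, -c] f := by
  refine MvPolynomial.funext fun x => ?_
  have hform : x 0 • (a • X 0 + b • X 1) + x 1 • (c • X 0 + d • X 1)
      = ((a * x 0 + c * x 1) • X 0 + (b * x 0 + d * x 1) • X 1 : MvPolynomial (Fin 2) K) := by
    module
  have hvec : !![b, d; -a, -c] *ᵥ x = ![b * x 0 + d * x 1, -(a * x 0 + c * x 1)] := by
    ext i
    fin_cases i <;> simp [dotProduct]; ring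
  rw [eval_reconstruction, hform, transvect_linearForm_pow hf, eval_C, smul_eval, eval_polyAct,
    hvec]

end BinaryForms

theorem odd_binary_reconstruction_general
    (K : Type*) [Field K] [IsAlgClosed K] [CharZero K]
    (k : ℕ)
    (f : MvPolynomial (Fin 2) K) (hf : f.IsHomogeneous k)
    (q : Fin 2 → (MvPolynomial (Fin 2) K → MvPolynomial (Fin 2) K))
    (dq : Fin 2 → ℕ)
    (hq : ∀ i, IsCovariant k 1 (dq i) (q i))
    (hli : LinearIndependent K (fun i => q i f)) :
    ∃ M : Matrix (Fin 2) (Fin 2) K, IsUnit M.det ∧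
      (∑ i ∈ Finset.range (k + 1),
          (k.choose i : K) •
            (transvect k ((q 0 f) ^ i * (q 1 f) ^ (k - i)) f *
              monomial (bexp i (k - i)) 1))
        = polyAct M f := by
  choose A hA using fun i => ((hq i).1 f hf).exists_eq_sum_smul_X
  have hdet : A 0 0 * A 1 1 - A 0 1 * A 1 0 ≠ 0 := by
    have hrows : LinearIndependent K fun i => ∑ j, Matrix.of A i j • (X j : MvPolynomial _ K) := by
      simpa only [Matrix.of_apply, hA] using hli
    simpa [det_fin_two] using Matrix.det_ne_zero_of_linearIndependent_sum_smul _ _ hrows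
  obtain ⟨e, he0, he⟩ : ∃ e : K, e ≠ 0 ∧ e ^ k = (k.factorial : K) ^ 2 := by
    rcases k.eq_zero_or_pos with rfl | hk
    · exact ⟨1, one_ne_zero, by simp⟩
    obtain ⟨e, he⟩ := IsAlgClosed.exists_pow_nat_eq ((k.factorial : K) ^ 2) hk
    refine ⟨e, fun h0 => ?_, he⟩
    rw [h0, zero_pow hk.ne'] at he
    exact pow_ne_zero 2 (Nat.cast_ne_zero.mpr k.factorial_ne_zero) he.symm
  refine ⟨e • !![A 0 1, A 1 1; -A 0 0, -A 1 0], ?_, ?_⟩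
  · rw [det_smul, det_fin_two_of, isUnit_iff_ne_zero]
    exact mul_ne_zero (pow_ne_zero _ he0) (by contrapose! hdet; linear_combination hdet)
  · change reconstruction k (q 0 f) (q 1 f) f = _
    rw [← hA 0, ← hA 1, Fin.sum_univ_two, Fin.sum_univ_two, reconstruction_linearForms hf,
      polyAct_smul_of_isHomogeneous hf, he]

/-- let `f` be a stable binary form of odd degree `k ≥ 5` with
trivial reduced stabilizer, and let `q₀, q₁` be covariants of order `1` of
`Sym^k(W*)` linearly independent at `f`.  Then
`f̃ = ∑ᵢ binom(k,i)·(q₀(f)^i q₁(f)^{k−i}, f)_k·X₀^i X₁^{k−i}` is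
`GL₂`-equivalent to `f`. -/
theorem odd_binary_reconstruction
    (K : Type*) [Field K] [IsAlgClosed K] [CharZero K]
    (k : ℕ) (hk5 : 5 ≤ k) (hkodd : Odd k)
    (f : MvPolynomial (Fin 2) K) (hf : f.IsHomogeneous k)
    (hclosed : ZClosed k (OrbitSL f))
    (hfinite : (StabSL f).Finite)
    (htriv : ∀ M ∈ StabSL f, ∃ lam : K,
      M = lam • (1 : Matrix (Fin 2) (Fin 2) K) ∧ lam ^ k = 1 ∧ lam ^ 2 = 1)
    (q : Fin 2 → (MvPolynomial (Fin 2) K → MvPolynomial (Fin 2) K))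
    (dq : Fin 2 → ℕ)
    (hq : ∀ i, IsCovariant k 1 (dq i) (q i))
    (hli : LinearIndependent K (fun i => q i f)) :
    ∃ M : Matrix (Fin 2) (Fin 2) K, IsUnit M.det ∧
      (∑ i ∈ Finset.range (k + 1),
          (k.choose i : K) •
            (transvect k ((q 0 f) ^ i * (q 1 f) ^ (k - i)) f *
              monomial (bexp i (k - i)) 1))
        = polyAct M f :=
  odd_binary_reconstruction_general K k f hf q dq hq hli
end
end
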